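/- arXiv:1603.04374 — 3 statements merged into one kernel-verified Lean document; each statement's English description precedes it below -/
import Mathlib

section
/- Let λ, q, μ, β > 0 with λ > qμ, let d ≥ 1, and suppose nonnegative reals (r_i)_{i=1}^n with r_i ≤ 1 satisfy for each i: r_i ≤ (λ Σ_{j∈N_i} r_j) / (β + (λ - qμ) Σ_{j∈N_i} r_j + qμ|N_i|), where |N_i| ≥ d for all i. Then Σ_{i=1}^n r_i ≤ (nλ - (β + qμd)) / (λ - qμ), provided nλ - (β + qμd) ≥ 0. -/
theorem stmt_14 {V : Type*} [Fintype V] (G : SimpleGraph V) [DecidableRel G.Adj]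
    (lam q μ β : ℝ) (d : ℕ)
    (hlam : 0 < lam) (hq : 0 < q) (hμ : 0 < μ) (hβ : 0 < β)
    (hfilter : q * μ < lam) (hd : 1 ≤ d) (hdeg : ∀ i, d ≤ G.degree i)
    (r : V → ℝ) (hr0 : ∀ i, 0 ≤ r i) (hr1 : ∀ i, r i ≤ 1)
    (hfix : ∀ i, r i ≤ (lam * ∑ j ∈ G.neighborFinset i, r j) /
      (β + (lam - q*μ) * ∑ j ∈ G.neighborFinset i, r j + q*μ*(G.degree i : ℝ)))
    (hnum : 0 ≤ (Fintype.card V : ℝ) * lam - (β + q*μ*(d : ℝ))) :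
    ∑ i : V, r i ≤ ((Fintype.card V : ℝ) * lam - (β + q*μ*(d : ℝ))) / (lam - q*μ) := by
  have hlq : 0 < lam - q * μ := by linarith
  have hrhs : 0 ≤ ((Fintype.card V : ℝ) * lam - (β + q*μ*(d : ℝ))) / (lam - q*μ) :=
    div_nonneg hnum hlq.le
  rcases isEmpty_or_nonempty V with hV | hV
  · simpa [Finset.univ_eq_empty] using hrhs
  obtain ⟨i, -, hi⟩ := Finset.exists_max_image Finset.univ r Finset.univ_nonempty
  set m := r i with hm_def
  have hm0 : 0 ≤ m := hr0 i
  set n := (Fintype.card V : ℝ) with hn_def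
  have hsumle : ∑ j : V, r j ≤ n * m := by
    calc ∑ j : V, r j ≤ ∑ _j : V, m :=
          Finset.sum_le_sum (fun j _ => hi j (Finset.mem_univ j))
      _ = n * m := by simp [hn_def, mul_comm]
  rcases eq_or_lt_of_le hm0 with hm | hm
  · have : ∑ j : V, r j ≤ 0 := by
      rw [← hm] at hsumle; simpa using hsumle
    linarith
  · set S := ∑ j ∈ G.neighborFinset i, r j with hS_def
    have hS0 : 0 ≤ S := Finset.sum_nonneg fun j _ => hr0 j
    have hn1 : (1 : ℝ) ≤ n := by
      have h1 : 1 ≤ Fintype.card V := Fintype.card_pos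
      rw [hn_def]; exact_mod_cast h1
    have hdegn : (G.degree i : ℝ) ≤ n - 1 := by
      have h : G.degree i + 1 ≤ Fintype.card V := G.degree_lt_card_verts i
      have h2 : ((G.degree i : ℝ)) + 1 ≤ n := by rw [hn_def]; exact_mod_cast h
      linarith
    have hSd : S ≤ (n - 1) * m := by
      calc S ≤ ∑ _j ∈ G.neighborFinset i, m :=
            Finset.sum_le_sum (fun j _ => hi j (Finset.mem_univ j))
        _ = (G.degree i : ℝ) * m := by
            simp [mul_comm]
        _ ≤ (n - 1) * m := mul_le_mul_of_nonneg_right hdegn hm0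
    have hdd : (d : ℝ) ≤ (G.degree i : ℝ) := by exact_mod_cast hdeg i
    have hB : 0 < β + (lam - q*μ) * S + q*μ*(G.degree i : ℝ) := by
      have ha : 0 ≤ (lam - q*μ) * S := mul_nonneg hlq.le hS0
      have hb : 0 ≤ q*μ*(G.degree i : ℝ) := by positivity
      linarith
    have h1 : m * (β + (lam - q*μ) * S + q*μ*(G.degree i : ℝ)) ≤ lam * S := by
      have := hfix i
      rw [le_div_iff₀ hB] at this
      linarith
    have hpos : 0 ≤ lam - (lam - q*μ) * m := by
      nlinarith [hr1 i]
    have hA : m * (β + q*μ*(d : ℝ)) ≤ S * (lam - (lam - q*μ) * m) := by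
      nlinarith [mul_le_mul_of_nonneg_left hdd (by positivity : (0:ℝ) ≤ m * (q*μ))]
    have hB2 : S * (lam - (lam - q*μ) * m) ≤ (n - 1) * m * (lam - (lam - q*μ) * m) :=
      mul_le_mul_of_nonneg_right hSd hpos
    have hC : β + q*μ*(d : ℝ) ≤ (n - 1) * (lam - (lam - q*μ) * m) := by
      have h := hA.trans hB2
      have := (mul_le_mul_iff_right₀ hm).mp (by nlinarith : m * (β + q*μ*(d : ℝ)) ≤
        m * ((n - 1) * (lam - (lam - q*μ) * m)))
      linarith
    rw [le_div_iff₀ hlq]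
    nlinarith [mul_le_mul_of_nonneg_left hsumle hlq.le,
      mul_le_mul_of_nonneg_left (hr1 i) hlq.le]
end

section
/- Let V be a finite set of viruses, fix v ∈ V, and let C_v ⊆ V \ {v} be the set of competitors of v. Let 𝓡 be the collection of subsets S ⊆ V such that no element of S competes with another element of S (in particular, if v ∈ S then S ∩ C_v = ∅). Then the map (S, R) ↦ (S \ {v}) ∪ R, defined on pairs with S ∈ 𝓡, v ∈ S, and R ⊆ C_v, is a bijection onto the collection of sets T ∈ 𝓡 with v ∉ T; its inverse is T ↦ (S, R) with S = (T \ C_v) ∪ {v} and R = T ∩ C_v. -/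
theorem stmt_17 {V : Type*} [Fintype V] [DecidableEq V]
    (comp : V → V → Prop) [DecidableRel comp]
    (hsymm : ∀ a b, comp a b → comp b a) (hirr : ∀ a, ¬ comp a a)
    (v : V)
    (Cv : Finset V) (hCv : Cv = Finset.univ.filter (fun u => comp v u))
    (R : Finset (Finset V))
    (hR : ∀ S : Finset V, S ∈ R ↔ ∀ a ∈ S, ∀ b ∈ S, ¬ comp a b) :
    ∀ T : Finset V, T ∈ R → v ∉ T →
      (∃! p : Finset V × Finset V,
        p.1 ∈ R ∧ v ∈ p.1 ∧ p.2 ⊆ Cv ∧ T = (p.1.erase v) ∪ p.2) ∧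
      ((T \ Cv) ∪ {v} ∈ R ∧ v ∈ (T \ Cv) ∪ {v} ∧ T ∩ Cv ⊆ Cv ∧
        T = (((T \ Cv) ∪ {v}).erase v) ∪ (T ∩ Cv)) := by
  intro T hT hvT
  have hmem : ∀ u, u ∈ Cv ↔ comp v u := by simp [hCv]
  have hTR := (hR T).mp hT
  have hS0 : (T \ Cv) ∪ {v} ∈ R := by
    rw [hR]
    intro a ha b hb
    simp only [Finset.mem_union, Finset.mem_sdiff, Finset.mem_singleton] at ha hb
    rcases ha with ⟨haT, haC⟩ | rfl
    · rcases hb with ⟨hbT, hbC⟩ | rfl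
      · exact hTR a haT b hbT
      · intro h; exact haC ((hmem a).mpr (hsymm _ _ h))
    · rcases hb with ⟨hbT, hbC⟩ | rfl
      · intro h; exact hbC ((hmem b).mpr h)
      · exact hirr _
  have hEq : T = (((T \ Cv) ∪ {v}).erase v) ∪ (T ∩ Cv) := by
    ext x
    simp only [Finset.mem_union, Finset.mem_erase, Finset.mem_sdiff,
      Finset.mem_singleton, Finset.mem_inter]
    constructor
    · intro hx
      by_cases hxC : x ∈ Cv
      · exact Or.inr ⟨hx, hxC⟩
      · exact Or.inl ⟨fun h => hvT (h ▸ hx), Or.inl ⟨hx, hxC⟩⟩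
    · rintro (⟨hne, ⟨hx, _⟩ | rfl⟩ | ⟨hx, _⟩)
      · exact hx
      · exact absurd rfl hne
      · exact hx
  refine ⟨⟨((T \ Cv) ∪ {v}, T ∩ Cv), ⟨hS0, by simp, Finset.inter_subset_right, hEq⟩, ?_⟩,
          hS0, by simp, Finset.inter_subset_right, hEq⟩
  rintro ⟨S, R'⟩ ⟨hSR, hvS, hR'C, hTeq⟩
  have hSdis : ∀ u ∈ S, u ∉ Cv := by
    intro u hu huC
    exact (hR S).mp hSR v hvS u hu ((hmem u).mp huC)
  have hR'eq : R' = T ∩ Cv := by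
    ext x
    simp only [Finset.mem_inter, hTeq, Finset.mem_union, Finset.mem_erase]
    constructor
    · intro hx; exact ⟨Or.inr hx, hR'C hx⟩
    · rintro ⟨⟨hne, hxS⟩ | hx, hxC⟩
      · exact absurd hxC (hSdis x hxS)
      · exact hx
  have hSeq : S = (T \ Cv) ∪ {v} := by
    ext x
    simp only [Finset.mem_union, Finset.mem_sdiff, Finset.mem_singleton, hTeq, Finset.mem_erase]
    constructor
    · intro hxS
      by_cases hxv : x = v
      · exact Or.inr hxv
      · exact Or.inl ⟨Or.inl ⟨hxv, hxS⟩, hSdis x hxS⟩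
    · rintro (⟨⟨hne, hxS⟩ | hxR, hxC⟩ | rfl)
      · exact hxS
      · exact absurd (hR'C hxR) hxC
      · exact hvS
  simp [Prod.ext_iff, hSeq, hR'eq]
end

section
/- Let n ≥ 1, and let x : [0,∞) → ℝⁿ, β : [0,∞) → ℝⁿ be continuously differentiable with x_i(t) ∈ [0,1] and β_i(t) > 0 for all i, t. Suppose ẋ_i = (1 - x_i) Σ_{j∈N_i} λ̂ x_j - β_i x_i on a graph with degrees |N_i| and β̇_i = α x_i with α > 0, λ̂ > 0. Define W(x,β) = (1/2)Σ_i x_i² + Σ_i Γ_i(β_i) with Γ_i(β) = (1/(2α))(|N_i|λ̂ - β)² for β ≤ |N_i|λ̂ and 0 otherwise. Then Ẇ(x(t), β(t)) ≤ 0 for all t, with Ẇ ≤ Σ_i (|N_i|λ̂ - β_i)(x_i² - x_i) when β_i ≤ |N_i|λ̂ and Ẇ ≤ Σ_i (|N_i|λ̂ - β_i) x_i² otherwise. -/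
lemma hd_pospart_sq (c b : ℝ) :
    HasDerivAt (fun u => (max (c - u) 0)^2) (-(2 * max (c - b) 0)) b := by
  rcases lt_trichotomy b c with h | h | h
  · have h1 : HasDerivAt (fun u : ℝ => (c - u)^2) ((2:ℕ) * (c - b)^1 * (-1)) b :=
      ((hasDerivAt_id b).const_sub c).pow 2
    have heq : (fun u : ℝ => (max (c - u) 0)^2) =ᶠ[nhds b] (fun u => (c - u)^2) := by
      filter_upwards [Iio_mem_nhds h] with u hu
      rw [max_eq_left (by linarith [hu.out] : (0:ℝ) ≤ c - u)]
    have h2 := h1.congr_of_eventuallyEq heq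
    refine h2.congr_deriv ?_
    rw [max_eq_left (by linarith : (0:ℝ) ≤ c - b)]
    push_cast
    ring
  · subst h
    have h0 : HasDerivAt (fun u => (max (b - u) 0)^2) 0 b := by
      rw [hasDerivAt_iff_isLittleO, Asymptotics.isLittleO_iff]
      intro ε hε
      filter_upwards [Metric.ball_mem_nhds b hε] with u hu
      rw [Metric.mem_ball, Real.dist_eq] at hu
      have h1 : max (b - u) 0 ≤ |u - b| := by
        apply max_le _ (abs_nonneg _)
        rw [abs_sub_comm]; exact le_abs_self _
      have h2 : (0:ℝ) ≤ max (b - u) 0 := le_max_right _ _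
      simp only [sub_self, max_self, smul_zero, sub_zero]
      rw [Real.norm_eq_abs, Real.norm_eq_abs]
      have h3 : (max (b-u) 0)^2 ≤ ε * |u - b| := by nlinarith [abs_nonneg (u - b)]
      calc |max (b - u) 0 ^ 2 - 0 ^ 2| = (max (b-u) 0)^2 := by
            rw [show (0:ℝ)^2 = 0 by ring, sub_zero]
            exact abs_of_nonneg (sq_nonneg _)
        _ ≤ ε * |u - b| := h3
    convert h0 using 1
    simp
  · have heq : (fun u : ℝ => (max (c - u) 0)^2) =ᶠ[nhds b] (fun _ => (0:ℝ)) := by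
      filter_upwards [Ioi_mem_nhds h] with u hu
      rw [max_eq_right (by linarith [hu.out] : c - u ≤ 0)]
      ring
    have h2 := (hasDerivAt_const b (0:ℝ)).congr_of_eventuallyEq heq
    refine h2.congr_deriv ?_
    rw [max_eq_right (by linarith : c - b ≤ 0)]
    ring

lemma sum_neighbor {V : Type*} [Fintype V] (G : SimpleGraph V) [DecidableRel G.Adj]
    (f : V → ℝ) :
    ∑ i : V, ∑ j ∈ G.neighborFinset i, f j = ∑ i : V, (G.degree i : ℝ) * f i := by
  have step : ∀ i : V, ∑ j ∈ G.neighborFinset i, f j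
      = ∑ j : V, if G.Adj i j then f j else 0 := by
    intro i
    rw [SimpleGraph.neighborFinset_eq_filter, Finset.sum_filter]
  simp_rw [step]
  rw [Finset.sum_comm]
  refine Finset.sum_congr rfl fun j _ => ?_
  have hsw : ∀ i : V, (if G.Adj i j then f j else 0) = (if G.Adj j i then f j else 0) :=
    fun i => if_congr (G.adj_comm i j) rfl rfl
  rw [Finset.sum_congr rfl (fun i _ => hsw i), ← Finset.sum_filter,
    ← SimpleGraph.neighborFinset_eq_filter, Finset.sum_const, nsmul_eq_mul,
    SimpleGraph.degree]

theorem stmt_19 {V : Type*} [Fintype V] [Nonempty V]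
    (G : SimpleGraph V) [DecidableRel G.Adj]
    (lamHat α : ℝ) (hlam : 0 < lamHat) (hα : 0 < α)
    (x β : ℝ → V → ℝ)
    (hx01 : ∀ t : ℝ, ∀ i, x t i ∈ Set.Icc (0:ℝ) 1)
    (hβpos : ∀ t : ℝ, ∀ i, 0 < β t i)
    (hxdyn : ∀ t : ℝ, ∀ i, HasDerivAt (fun s => x s i)
      ((1 - x t i) * ∑ j ∈ G.neighborFinset i, lamHat * x t j - β t i * x t i) t)
    (hβdyn : ∀ t : ℝ, ∀ i, HasDerivAt (fun s => β s i) (α * x t i) t)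
    (Γ : V → ℝ → ℝ)
    (hΓ : ∀ i, ∀ b : ℝ, Γ i b =
      if b ≤ (G.degree i : ℝ) * lamHat then ((G.degree i : ℝ) * lamHat - b)^2 / (2*α) else 0)
    (W : ℝ → ℝ)
    (hW : ∀ t : ℝ, W t = (1/2) * ∑ i : V, (x t i)^2 + ∑ i : V, Γ i (β t i)) :
    ∀ t : ℝ,
      deriv W t ≤ ∑ i : V,
        (if β t i ≤ (G.degree i : ℝ) * lamHat then
          ((G.degree i : ℝ) * lamHat - β t i) * ((x t i)^2 - x t i)
        else ((G.degree i : ℝ) * lamHat - β t i) * (x t i)^2) ∧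
      deriv W t ≤ 0 := by
  intro t
  set c : V → ℝ := fun i => (G.degree i : ℝ) * lamHat with hc
  -- Γ as a max-function
  have hΓfun : ∀ i, Γ i = fun b => (max (c i - b) 0)^2 / (2*α) := by
    intro i
    funext b
    rw [hΓ]
    split_ifs with h
    · rw [max_eq_left (by simpa [hc] using sub_nonneg.mpr h)]
    · rw [max_eq_right (by simp only [hc]; linarith [not_le.mp h])]
      simp
  -- derivative of each Γ i ∘ β · i
  have hΓd : ∀ i, HasDerivAt (fun s => Γ i (β s i)) (-(max (c i - β t i) 0) * x t i) t := by
    intro i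
    have h1 : HasDerivAt (fun b => (max (c i - b) 0)^2 / (2*α))
        ((-(2 * max (c i - β t i) 0)) / (2*α)) (β t i) :=
      (hd_pospart_sq (c i) (β t i)).div_const (2*α)
    have h2 := h1.comp t (hβdyn t i)
    rw [hΓfun i]
    refine h2.congr_deriv ?_
    field_simp
  -- derivative of W
  set D : ℝ := ∑ i : V, (x t i *
      ((1 - x t i) * ∑ j ∈ G.neighborFinset i, lamHat * x t j - β t i * x t i)
      + (-(max (c i - β t i) 0)) * x t i) with hD
  have hWd : HasDerivAt W D t := by
    have h1 : HasDerivAt (fun s => ∑ i : V, (x s i)^2)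
        (∑ i : V, 2 * x t i *
          ((1 - x t i) * ∑ j ∈ G.neighborFinset i, lamHat * x t j - β t i * x t i)) t := by
      refine HasDerivAt.fun_sum fun i _ => ?_
      have := (hxdyn t i).pow 2
      refine this.congr_deriv ?_
      push_cast
      ring
    have h2 : HasDerivAt (fun s => ∑ i : V, Γ i (β s i))
        (∑ i : V, (-(max (c i - β t i) 0)) * x t i) t :=
      HasDerivAt.fun_sum fun i _ => hΓd i
    have h3 := (h1.const_mul (1/2 : ℝ)).add h2
    have hWeq : W = fun s => (1/2) * ∑ i : V, (x s i)^2 + ∑ i : V, Γ i (β s i) :=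
      funext hW
    rw [hWeq]
    refine h3.congr_deriv ?_
    rw [hD, Finset.mul_sum, ← Finset.sum_add_distrib]
    refine Finset.sum_congr rfl fun i _ => ?_
    ring
  have hderiv : deriv W t = D := hWd.deriv
  -- sum swap lemma
  have hswap : ∀ f : V → ℝ, ∑ i : V, ∑ j ∈ G.neighborFinset i, f j
      = ∑ i : V, (G.degree i : ℝ) * f i := fun f => sum_neighbor G f
  -- bound D
  have hx0 : ∀ i, 0 ≤ x t i := fun i => (hx01 t i).1
  have hx1 : ∀ i, x t i ≤ 1 := fun i => (hx01 t i).2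
  have hS : ∀ i, 0 ≤ ∑ j ∈ G.neighborFinset i, lamHat * x t j := by
    intro i
    exact Finset.sum_nonneg fun j _ => mul_nonneg hlam.le (hx0 j)
  -- step 1: D ≤ ∑ (x_i * S_i - β_i x_i^2 - max * x_i)
  have step1 : D ≤ ∑ i : V, (x t i * (∑ j ∈ G.neighborFinset i, lamHat * x t j)
      - β t i * (x t i)^2 - max (c i - β t i) 0 * x t i) := by
    rw [hD]
    refine Finset.sum_le_sum fun i _ => ?_
    have h1 : x t i * ((1 - x t i) * ∑ j ∈ G.neighborFinset i, lamHat * x t j)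
        ≤ x t i * (∑ j ∈ G.neighborFinset i, lamHat * x t j) := by
      have := mul_nonneg (mul_nonneg (hx0 i) (hx0 i)) (hS i)
      nlinarith [hS i, hx0 i]
    nlinarith [h1]
  -- step 2: ∑ x_i S_i ≤ ∑ c_i x_i^2
  have step2 : ∑ i : V, x t i * (∑ j ∈ G.neighborFinset i, lamHat * x t j)
      ≤ ∑ i : V, c i * (x t i)^2 := by
    have e1 : ∀ i : V, x t i * (∑ j ∈ G.neighborFinset i, lamHat * x t j)
        = ∑ j ∈ G.neighborFinset i, lamHat * (x t i * x t j) := by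
      intro i
      rw [Finset.mul_sum]
      exact Finset.sum_congr rfl fun j _ => by ring
    simp_rw [e1]
    have e2 : ∑ i : V, ∑ j ∈ G.neighborFinset i, lamHat * (x t i * x t j)
        ≤ ∑ i : V, ∑ j ∈ G.neighborFinset i, (lamHat/2 * (x t i)^2 + lamHat/2 * (x t j)^2) := by
      refine Finset.sum_le_sum fun i _ => Finset.sum_le_sum fun j _ => ?_
      nlinarith [sq_nonneg (x t i - x t j), hlam.le]
    refine e2.trans (le_of_eq ?_)
    have e3 : ∑ i : V, ∑ j ∈ G.neighborFinset i, (lamHat/2 * (x t i)^2 + lamHat/2 * (x t j)^2)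
        = ∑ i : V, ((G.degree i : ℝ) * (lamHat/2 * (x t i)^2))
          + ∑ i : V, ∑ j ∈ G.neighborFinset i, lamHat/2 * (x t j)^2 := by
      rw [← Finset.sum_add_distrib]
      refine Finset.sum_congr rfl fun i _ => ?_
      rw [Finset.sum_add_distrib, Finset.sum_const, nsmul_eq_mul,
        SimpleGraph.card_neighborFinset_eq_degree]
    rw [e3, hswap (fun j => lamHat/2 * (x t j)^2)]
    rw [← Finset.sum_add_distrib]
    refine Finset.sum_congr rfl fun i _ => ?_
    simp only [hc]
    ring
  -- combine: D ≤ ∑ ((c_i - β_i) x_i^2 - max * x_i)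
  have step3 : D ≤ ∑ i : V, ((c i - β t i) * (x t i)^2 - max (c i - β t i) 0 * x t i) := by
    refine step1.trans ?_
    have := step2
    have expand : ∑ i : V, ((c i - β t i) * (x t i)^2 - max (c i - β t i) 0 * x t i)
        = ∑ i : V, c i * (x t i)^2
          + ∑ i : V, (- (β t i * (x t i)^2) - max (c i - β t i) 0 * x t i) := by
      rw [← Finset.sum_add_distrib]
      exact Finset.sum_congr rfl fun i _ => by ring
    have expand2 : ∑ i : V, (x t i * (∑ j ∈ G.neighborFinset i, lamHat * x t j)
          - β t i * (x t i)^2 - max (c i - β t i) 0 * x t i)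
        = ∑ i : V, x t i * (∑ j ∈ G.neighborFinset i, lamHat * x t j)
          + ∑ i : V, (- (β t i * (x t i)^2) - max (c i - β t i) 0 * x t i) := by
      rw [← Finset.sum_add_distrib]
      exact Finset.sum_congr rfl fun i _ => by ring
    rw [expand, expand2]
    exact add_le_add_left step2 _
  -- per-term identification with the target
  have htarget : ∀ i : V, (c i - β t i) * (x t i)^2 - max (c i - β t i) 0 * x t i
      = (if β t i ≤ (G.degree i : ℝ) * lamHat then
          ((G.degree i : ℝ) * lamHat - β t i) * ((x t i)^2 - x t i)
        else ((G.degree i : ℝ) * lamHat - β t i) * (x t i)^2) := by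
    intro i
    simp only [hc]
    split_ifs with h
    · rw [max_eq_left (sub_nonneg.mpr h)]
      ring
    · rw [max_eq_right (by linarith [not_le.mp h])]
      ring
  have hmain : deriv W t ≤ ∑ i : V,
      (if β t i ≤ (G.degree i : ℝ) * lamHat then
        ((G.degree i : ℝ) * lamHat - β t i) * ((x t i)^2 - x t i)
      else ((G.degree i : ℝ) * lamHat - β t i) * (x t i)^2) := by
    rw [hderiv]
    refine step3.trans (le_of_eq (Finset.sum_congr rfl fun i _ => htarget i))
  refine ⟨hmain, hmain.trans ?_⟩
  refine Finset.sum_nonpos fun i _ => ?_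
  split_ifs with h
  · have h1 : (0:ℝ) ≤ (G.degree i : ℝ) * lamHat - β t i := sub_nonneg.mpr h
    have h2 : (x t i)^2 - x t i ≤ 0 := by nlinarith [hx0 i, hx1 i]
    exact mul_nonpos_of_nonneg_of_nonpos h1 h2
  · have h1 : (G.degree i : ℝ) * lamHat - β t i ≤ 0 := by linarith [not_le.mp h]
    exact mul_nonpos_of_nonpos_of_nonneg h1 (sq_nonneg _)
end
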